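/- arXiv:1703.04465 — 5 statements merged into one kernel-verified Lean document; each statement's English description precedes it below -/
import Mathlib

section
/- Let (λ_k)_{k∈ℕ} be a sequence of positive real numbers with ∑_{k∈ℕ} 1/λ_k < ∞, and let ν > 0. Then lim_{τ→∞} ∏_{k∈ℕ} (1 − e^{−λ_k/τ})/(1 − e^{−(λ_k+ν)/τ}) = ∏_{k∈ℕ} λ_k/(λ_k + ν), where both infinite products converge (to positive real numbers) for every τ > 0. -/
/-!
For `τ > 0` every factor `(1 - e^{-λ/τ})/(1 - e^{-(λ+ν)/τ})` lies between `λ/(λ+ν)` and `1`,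
because `y ↦ (1 - e^{-y})/y` is decreasing. Hence all factors, and their limits `λ_k/(λ_k+ν)`,
are within `ν/λ_k` of `1`, a summable bound independent of `τ`: the products converge to
nonzero limits, and dominated convergence for infinite products carries the factorwise limit
`τ → ∞` through the product.
-/

open Real Filter Topology

section InfiniteProduct

variable {ι : Type*}

theorem multipliable_of_summable_norm_sub_one {R : Type*} [NormedCommRing R] [NormOneClass R]
    [CompleteSpace R] {f : ι → R} (hf : Summable fun i => ‖f i - 1‖) : Multipliable f := by
  simpa using multipliable_one_add_of_summable hf

theorem Real.tprod_pos_of_summable_norm_sub_one {f : ι → ℝ} (hpos : ∀ i, 0 < f i)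
    (hf : Summable fun i => ‖f i - 1‖) : 0 < ∏' i, f i := by
  have hne : ∏' i, (1 + (f i - 1)) ≠ 0 :=
    tprod_one_add_ne_zero_of_summable (fun i => by simpa using (hpos i).ne') hf
  simp only [add_sub_cancel] at hne
  exact (tprod_nonneg fun i => (hpos i).le).lt_of_ne' hne

theorem tendsto_tprod_of_dominated_convergence {α R : Type*} [NormedCommRing R]
    [NormOneClass R] [CompleteSpace R] {𝓕 : Filter α} {f : α → ι → R} {g : ι → R}
    {bound : ι → ℝ} (h_sum : Summable bound) (hfg : ∀ k, Tendsto (f · k) 𝓕 (𝓝 (g k)))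
    (h_bound : ∀ᶠ n in 𝓕, ∀ k, ‖f n k - 1‖ ≤ bound k) :
    Tendsto (fun n => ∏' k, f n k) 𝓕 (𝓝 (∏' k, g k)) := by
  simpa using tendsto_tprod_one_add_of_dominated_convergence (f := fun n k => f n k - 1)
    (g := fun k => g k - 1) h_sum (fun k => (hfg k).sub_const 1) h_bound

end InfiniteProduct

theorem Real.one_sub_exp_neg_pos {a : ℝ} (ha : 0 < a) : 0 < 1 - exp (-a) := by
  simpa using exp_lt_one_iff.mpr (neg_neg_of_pos ha)

theorem Real.one_sub_exp_neg_div_le_one {a b : ℝ} (ha : 0 < a) (hab : a ≤ b) :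
    (1 - exp (-a)) / (1 - exp (-b)) ≤ 1 := by
  rw [div_le_one (one_sub_exp_neg_pos (ha.trans_le hab))]
  gcongr

theorem Real.div_le_one_sub_exp_neg_div {a b : ℝ} (ha : 0 < a) (hab : a ≤ b) :
    a / b ≤ (1 - exp (-a)) / (1 - exp (-b)) := by
  have hb := ha.trans_le hab
  rw [div_le_div_iff₀ hb (one_sub_exp_neg_pos hb)]
  -- `e^{-b} = e^{-a} e^{-(b-a)} ≥ e^{-a} (1 - (b - a))` and `(1 + a) e^{-a} ≤ 1`
  have hsplit : exp (-b) = exp (-a) * exp (-(b - a)) := by rw [← exp_add]; ring_nf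
  have hexp_gap := add_one_le_exp (-(b - a))
  have hexp_a : (a + 1) * exp (-a) ≤ 1 := by
    calc (a + 1) * exp (-a) ≤ exp a * exp (-a) := by gcongr; exact add_one_le_exp a
      _ = 1 := by rw [← exp_add, add_neg_cancel, exp_zero]
  have hexp_pos := exp_pos (-a)
  rw [hsplit]
  nlinarith [mul_le_mul_of_nonneg_left hexp_gap hexp_pos.le, mul_nonneg ha.le hexp_pos.le,
    sub_nonneg.mpr hab]

theorem Real.tendsto_one_sub_exp_neg_div_self :
    Tendsto (fun y => (1 - exp (-y)) / y) (𝓝[≠] 0) (𝓝 1) := by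
  have hd : HasDerivAt (fun y => 1 - exp (-y)) 1 0 := by
    simpa using ((hasDerivAt_neg 0).exp).const_sub 1
  rw [hasDerivAt_iff_tendsto_slope_zero] at hd
  refine hd.congr fun y => ?_
  simp [div_eq_inv_mul]

theorem Real.tendsto_one_sub_exp_neg_div_one_sub_exp_neg {c d : ℝ} (hc : 0 < c) (hd : 0 < d) :
    Tendsto (fun τ => (1 - exp (-(c / τ))) / (1 - exp (-(d / τ)))) atTop (𝓝 (c / d)) := by
  have hzero {x : ℝ} (hx : 0 < x) : Tendsto (fun τ => x / τ) atTop (𝓝[≠] 0) :=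
    tendsto_nhdsWithin_of_tendsto_nhds_of_eventually_within _
      (tendsto_const_nhds.div_atTop tendsto_id)
      (eventually_gt_atTop 0 |>.mono fun τ hτ => (div_pos hx hτ).ne')
  have h := ((tendsto_one_sub_exp_neg_div_self.comp (hzero hc)).div
    (tendsto_one_sub_exp_neg_div_self.comp (hzero hd)) one_ne_zero).mul_const (c / d)
  rw [div_one, one_mul] at h
  refine h.congr' (eventually_gt_atTop 0 |>.mono fun τ hτ => ?_)
  have := one_sub_exp_neg_pos (div_pos hd hτ)
  simp only [Pi.div_apply, Function.comp_apply]
  field_simp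

theorem Real.div_add_le_one_sub_exp_neg_div_le_one {x ν τ : ℝ} (hx : 0 < x) (hν : 0 ≤ ν)
    (hτ : 0 < τ) :
    x / (x + ν) ≤ (1 - exp (-(x / τ))) / (1 - exp (-((x + ν) / τ))) ∧
      (1 - exp (-(x / τ))) / (1 - exp (-((x + ν) / τ))) ≤ 1 := by
  have hxτ : 0 < x / τ := div_pos hx hτ
  have hle : x / τ ≤ (x + ν) / τ := by gcongr; linarith
  refine ⟨?_, one_sub_exp_neg_div_le_one hxτ hle⟩
  simpa [div_div_div_cancel_right₀ hτ.ne'] using div_le_one_sub_exp_neg_div hxτ hle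

theorem Real.norm_sub_one_le_of_le_of_le_one {a x : ℝ} (h₁ : a ≤ x) (h₂ : x ≤ 1) :
    ‖x - 1‖ ≤ 1 - a := by
  rw [Real.norm_eq_abs, abs_le]
  constructor <;> linarith

theorem summable_one_sub_div_add_const {ι : Type*} {lam : ι → ℝ} (hpos : ∀ k, 0 < lam k)
    (hsum : Summable fun k => 1 / lam k) {ν : ℝ} (hν : 0 ≤ ν) :
    Summable fun k => 1 - lam k / (lam k + ν) := by
  have hlam_add (k : ι) : 0 < lam k + ν := by linarith [hpos k]
  refine (hsum.mul_left ν).of_nonneg_of_le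
    (fun k => sub_nonneg.2 ((div_le_one (hlam_add k)).2 (by linarith))) fun k => ?_
  rw [one_sub_div (hlam_add k).ne', add_sub_cancel_left, mul_one_div]
  gcongr
  · exact hpos k
  · linarith

/-- Let `(λ k)` be positive reals with `∑ 1/λ k < ∞` and let `ν > 0`. Then the infinite
products `∏ₖ (1 - e^{-λₖ/τ})/(1 - e^{-(λₖ+ν)/τ})` (for every `τ > 0`) and
`∏ₖ λₖ/(λₖ+ν)` converge to positive real numbers, and the former tends to the latter
as `τ → ∞`. -/
theorem tendsto_prod_ratio_exp (lam : ℕ → ℝ) (hpos : ∀ k, 0 < lam k)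
    (hsum : Summable fun k => 1 / lam k) (ν : ℝ) (hν : 0 < ν) :
    (∀ τ : ℝ, 0 < τ → Multipliable fun k =>
      (1 - Real.exp (-lam k / τ)) / (1 - Real.exp (-(lam k + ν) / τ))) ∧
    (Multipliable fun k => lam k / (lam k + ν)) ∧
    (∀ τ : ℝ, 0 < τ →
      0 < ∏' k, (1 - Real.exp (-lam k / τ)) / (1 - Real.exp (-(lam k + ν) / τ))) ∧
    (0 < ∏' k, lam k / (lam k + ν)) ∧
    Filter.Tendsto
      (fun τ : ℝ => ∏' k, (1 - Real.exp (-lam k / τ)) / (1 - Real.exp (-(lam k + ν) / τ)))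
      Filter.atTop (nhds (∏' k, lam k / (lam k + ν))) := by
  simp only [neg_div]
  have hlam_add (k : ℕ) : 0 < lam k + ν := by linarith [hpos k]
  have hF_mem {τ : ℝ} (hτ : 0 < τ) (k : ℕ) :=
    div_add_le_one_sub_exp_neg_div_le_one (hpos k) hν.le hτ
  have hg_le (k : ℕ) : lam k / (lam k + ν) ≤ 1 := (div_le_one (hlam_add k)).2 (by linarith)
  have hbound := summable_one_sub_div_add_const hpos hsum hν.le
  have hF_near_one {τ : ℝ} (hτ : 0 < τ) (k : ℕ) :=
    norm_sub_one_le_of_le_of_le_one (hF_mem hτ k).1 (hF_mem hτ k).2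
  have hF_dev {τ : ℝ} (hτ : 0 < τ) :=
    hbound.of_nonneg_of_le (fun _ => norm_nonneg _) (hF_near_one hτ)
  have hg_dev := hbound.of_nonneg_of_le (fun _ => norm_nonneg _)
    fun k => norm_sub_one_le_of_le_of_le_one le_rfl (hg_le k)
  have hg_pos (k : ℕ) : 0 < lam k / (lam k + ν) := div_pos (hpos k) (hlam_add k)
  refine ⟨fun τ hτ => multipliable_of_summable_norm_sub_one (hF_dev hτ),
    multipliable_of_summable_norm_sub_one hg_dev,
    fun τ hτ => tprod_pos_of_summable_norm_sub_one
      (fun k => (hg_pos k).trans_le (hF_mem hτ k).1) (hF_dev hτ),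
    tprod_pos_of_summable_norm_sub_one hg_pos hg_dev, ?_⟩
  exact tendsto_tprod_of_dominated_convergence hbound
    (fun k => tendsto_one_sub_exp_neg_div_one_sub_exp_neg (hpos k) (hlam_add k))
    (eventually_gt_atTop 0 |>.mono fun τ hτ => hF_near_one hτ)
end

section
/- There exists a constant C > 0 such that for all λ > 0, ν > 0 and τ > 0, |(1 − e^{−λ/τ})/(1 − e^{−(λ+ν)/τ}) − 1| ≤ C ν/λ. -/
/-! With `x = e^{-λ/τ}` and `y = e^{-ν/τ}` the quantity is `x (1 - y) / (1 - x y)`, which is at most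
`x (1 - y) / (1 - x)`. Now `1 - y ≤ ν/τ` and `x / (1 - x) = 1 / (e^{λ/τ} - 1) ≤ τ/λ`, so `C = 1` works,
and the scale `τ` cancels. -/

open Real

lemma abs_one_sub_div_one_sub_mul_sub_one_le {x y : ℝ} (hx0 : 0 ≤ x) (hx1 : x < 1)
    (hy1 : y ≤ 1) :
    |(1 - x) / (1 - x * y) - 1| ≤ x * (1 - y) / (1 - x) := by
  have hxy : 1 - x ≤ 1 - x * y := by nlinarith
  have hpos : 0 < 1 - x := by linarith
  have hdiff : (1 - x) / (1 - x * y) - 1 = -(x * (1 - y) / (1 - x * y)) := by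
    field_simp [(hpos.trans_le hxy).ne']
    ring
  have hnum : 0 ≤ x * (1 - y) := mul_nonneg hx0 (by linarith)
  rw [hdiff, abs_neg, abs_of_nonneg (div_nonneg hnum (hpos.trans_le hxy).le)]
  exact div_le_div_of_nonneg_left hnum hpos hxy

lemma exp_neg_div_one_sub_exp_neg_le_inv {a : ℝ} (ha : 0 < a) :
    exp (-a) / (1 - exp (-a)) ≤ a⁻¹ := by
  have hea : 0 < exp a - 1 := by linarith [add_one_le_exp a]
  have hrewrite : exp (-a) / (1 - exp (-a)) = (exp a - 1)⁻¹ := by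
    rw [exp_neg]
    field_simp [(exp_pos a).ne', hea.ne']
  rw [hrewrite]
  exact inv_anti₀ ha (by linarith [add_one_le_exp a])

lemma abs_one_sub_exp_neg_div_one_sub_exp_neg_add_sub_one_le {a b : ℝ} (ha : 0 < a) (hb : 0 ≤ b) :
    |(1 - exp (-a)) / (1 - exp (-(a + b))) - 1| ≤ b / a := by
  have hsplit : exp (-(a + b)) = exp (-a) * exp (-b) := by rw [neg_add, exp_add]
  have hx1 : exp (-a) < 1 := exp_lt_one_iff.2 (by linarith)
  have hy1 : exp (-b) ≤ 1 := exp_le_one_iff.2 (by linarith)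
  calc |(1 - exp (-a)) / (1 - exp (-(a + b))) - 1|
      ≤ exp (-a) * (1 - exp (-b)) / (1 - exp (-a)) := by
        rw [hsplit]
        exact abs_one_sub_div_one_sub_mul_sub_one_le (exp_pos _).le hx1 hy1
    _ = (1 - exp (-b)) * (exp (-a) / (1 - exp (-a))) := by ring
    _ ≤ b * a⁻¹ := by
        gcongr ?_ * ?_
        · linarith [one_sub_le_exp_neg b]
        · exact exp_neg_div_one_sub_exp_neg_le_inv ha
    _ = b / a := by rw [div_eq_mul_inv]

/-- There is a constant `C > 0` such that for all `λ, ν, τ > 0`,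
`|(1 - e^{-λ/τ})/(1 - e^{-(λ+ν)/τ}) - 1| ≤ C ν / λ`. -/
theorem abs_ratio_exp_sub_one_le : ∃ C : ℝ, 0 < C ∧
    ∀ lam ν τ : ℝ, 0 < lam → 0 < ν → 0 < τ →
      |(1 - Real.exp (-lam / τ)) / (1 - Real.exp (-(lam + ν) / τ)) - 1| ≤ C * ν / lam := by
  refine ⟨1, one_pos, fun lam ν τ hlam hν hτ => ?_⟩
  have hbound := abs_one_sub_exp_neg_div_one_sub_exp_neg_add_sub_one_le
    (div_pos hlam hτ) (div_pos hν hτ).le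
  rw [← neg_div, ← add_div, ← neg_div, div_div_div_cancel_right₀ hτ.ne'] at hbound
  rwa [one_mul]
end

section
/- Let (λ_k)_{k∈ℕ} be positive reals with ∑_{k∈ℕ} 1/λ_k < ∞ and let ν > 0. Let μ = ⊗_{k∈ℕ} μ_k be the product probability measure on ℂ^ℕ, where each μ_k is the standard complex Gaussian measure with density π^{−1} e^{−|z|²} with respect to Lebesgue measure on ℂ. Then the sum 𝒩(ω) = ∑_{k∈ℕ} |ω_k|²/λ_k converges μ-almost surely, and ∫_{ℂ^ℕ} e^{−ν 𝒩(ω)} dμ(ω) = ∏_{k∈ℕ} λ_k/(λ_k + ν), where the integrand is interpreted as 0 on the null set where the sum diverges. -/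
open scoped Classical

open MeasureTheory

/-- The standard complex Gaussian measure on `ℂ`, with density `π⁻¹ e^{-|z|²}` with
respect to Lebesgue measure on `ℂ ≃ ℝ²`. -/
noncomputable def stdComplexGaussian : Measure ℂ :=
  volume.withDensity fun z => ENNReal.ofReal (Real.pi⁻¹ * Real.exp (-‖z‖ ^ 2))

/-!
Via its values on cylinder sets, `μ` is the infinite product of standard complex Gaussians.
Under that law `E |ω_k|² = 1`, so `E 𝒩 = ∑ 1/λ_k < ∞` and `𝒩` is a.s. finite. The partial sums
`𝒩_n` satisfy `e^{-ν𝒩_n} = ∏_{k<n} e^{-(ν/λ_k)|ω_k|²}`, whose integral factorises by independence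
into `∏_{k<n} (1 + ν/λ_k)⁻¹`. The integrands are bounded by `1` and converge to the interpreted
integrand (to `0` where `𝒩` diverges), so dominated convergence passes to the limit, and the
infinite product converges because `∑ ν/(λ_k+ν) < ∞`.
-/

open Filter Topology Real

lemma measurable_stdComplexGaussian_density :
    Measurable fun z : ℂ => ENNReal.ofReal (π⁻¹ * rexp (-‖z‖ ^ 2)) := by
  fun_prop

section
variable {E : Type*} [NormedAddCommGroup E] [NormedSpace ℝ E]

lemma integral_stdComplexGaussian (g : ℂ → E) :
    ∫ z, g z ∂stdComplexGaussian = ∫ z, (π⁻¹ * rexp (-‖z‖ ^ 2)) • g z := by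
  simp only [stdComplexGaussian, integral_withDensity_eq_integral_toReal_smul
    measurable_stdComplexGaussian_density (ae_of_all _ fun _ => ENNReal.ofReal_lt_top),
    fun z : ℂ => ENNReal.toReal_ofReal (by positivity : 0 ≤ π⁻¹ * rexp (-‖z‖ ^ 2))]

lemma integrable_stdComplexGaussian_iff {g : ℂ → E} :
    Integrable g stdComplexGaussian ↔ Integrable fun z => (π⁻¹ * rexp (-‖z‖ ^ 2)) • g z := by
  simp only [stdComplexGaussian, integrable_withDensity_iff_integrable_smul'
    measurable_stdComplexGaussian_density (ae_of_all _ fun _ => ENNReal.ofReal_lt_top),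
    fun z : ℂ => ENNReal.toReal_ofReal (by positivity : 0 ≤ π⁻¹ * rexp (-‖z‖ ^ 2))]

end

lemma Complex.integral_exp_neg_mul_sq_norm {b : ℝ} (hb : 0 < b) :
    ∫ z : ℂ, rexp (-b * ‖z‖ ^ 2) = π / b := by
  have h := Complex.integral_rpow_mul_exp_neg_mul_rpow (p := 2) (q := 0) one_le_two (by norm_num) hb
  norm_num [Real.rpow_neg_one] at h
  simpa [div_eq_mul_inv] using h

lemma Complex.integral_sq_norm_mul_exp_neg_sq_norm :
    ∫ z : ℂ, ‖z‖ ^ 2 * rexp (-‖z‖ ^ 2) = π := by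
  simpa using Complex.integral_rpow_mul_exp_neg_rpow (p := 2) (q := 2) one_le_two (by norm_num)

lemma integral_exp_neg_mul_sq_norm_stdComplexGaussian {a : ℝ} (ha : -1 < a) :
    ∫ z, rexp (-a * ‖z‖ ^ 2) ∂stdComplexGaussian = (1 + a)⁻¹ := by
  have hexp (z : ℂ) : rexp (-‖z‖ ^ 2) * rexp (-a * ‖z‖ ^ 2) = rexp (-(1 + a) * ‖z‖ ^ 2) := by
    rw [← Real.exp_add]; ring_nf
  simp_rw [integral_stdComplexGaussian, smul_eq_mul, mul_assoc, hexp, integral_const_mul,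
    Complex.integral_exp_neg_mul_sq_norm (by linarith : 0 < 1 + a)]
  field_simp

instance : IsProbabilityMeasure stdComplexGaussian := by
  have h := integral_exp_neg_mul_sq_norm_stdComplexGaussian (a := 0) (by norm_num)
  simp only [neg_zero, zero_mul, Real.exp_zero, add_zero, inv_one, integral_const, smul_eq_mul,
    mul_one, measureReal_def] at h
  exact ⟨(ENNReal.toReal_eq_one_iff _).1 h⟩

lemma integrable_sq_norm_stdComplexGaussian :
    Integrable (fun z => ‖z‖ ^ 2) stdComplexGaussian := by
  rw [integrable_stdComplexGaussian_iff]
  -- a non-integrable function would have integral `0`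
  refine Integrable.of_integral_ne_zero ?_
  simp_rw [smul_eq_mul, mul_assoc, integral_const_mul, mul_comm (rexp _),
    Complex.integral_sq_norm_mul_exp_neg_sq_norm]
  positivity

lemma integral_sq_norm_stdComplexGaussian :
    ∫ z, ‖z‖ ^ 2 ∂stdComplexGaussian = 1 := by
  simp_rw [integral_stdComplexGaussian, smul_eq_mul, mul_assoc, integral_const_mul,
    mul_comm (rexp _), Complex.integral_sq_norm_mul_exp_neg_sq_norm]
  field_simp

lemma ae_summable_of_summable_integral {α ι : Type*} [MeasurableSpace α] [Countable ι]
    {μ : Measure α} {f : ι → α → ℝ} (hf₀ : ∀ i x, 0 ≤ f i x) (hf : ∀ i, Integrable (f i) μ)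
    (hs : Summable fun i => ∫ x, f i x ∂μ) :
    ∀ᵐ x ∂μ, Summable fun i => f i x := by
  have hfin : ∫⁻ x, ∑' i, ENNReal.ofReal (f i x) ∂μ ≠ ⊤ := by
    rw [lintegral_tsum fun i => (hf i).aemeasurable.ennreal_ofReal]
    simp_rw [← ofReal_integral_eq_lintegral_ofReal (hf _) (ae_of_all _ (hf₀ _)),
      ← ENNReal.ofReal_tsum_of_nonneg (fun i => integral_nonneg (hf₀ i)) hs]
    exact ENNReal.ofReal_ne_top
  filter_upwards [ae_lt_top' (AEMeasurable.tsum fun i =>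
    (hf i).aemeasurable.ennreal_ofReal) hfin] with x hx
  simpa [ENNReal.toReal_ofReal (hf₀ _ x)] using ENNReal.summable_toReal hx.ne

lemma tendsto_exp_neg_mul_sum_range {a : ℕ → ℝ} (ha : ∀ k, 0 ≤ a k) {ν : ℝ} (hν : 0 < ν) :
    Tendsto (fun n => rexp (-ν * ∑ k ∈ Finset.range n, a k)) atTop
      (𝓝 (if Summable a then rexp (-ν * ∑' k, a k) else 0)) := by
  split_ifs with h
  · exact (Real.continuous_exp.tendsto _).comp (h.hasSum.tendsto_sum_nat.const_mul (-ν))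
  · refine Real.tendsto_exp_atBot.comp ((tendsto_const_mul_atBot_of_neg (by linarith)).2 ?_)
    exact (not_summable_iff_tendsto_nat_atTop_of_nonneg ha).1 h

lemma tendsto_integral_exp_neg_mul_sum_range {α : Type*} [MeasurableSpace α] {μ : Measure α}
    [IsFiniteMeasure μ] {a : ℕ → α → ℝ} (ha₀ : ∀ k x, 0 ≤ a k x) (ha : ∀ k, Measurable (a k))
    {ν : ℝ} (hν : 0 < ν) :
    Tendsto (fun n => ∫ x, rexp (-ν * ∑ k ∈ Finset.range n, a k x) ∂μ) atTop
      (𝓝 (∫ x, (if Summable (fun k => a k x) then rexp (-ν * ∑' k, a k x) else 0) ∂μ)) := by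
  refine tendsto_integral_of_dominated_convergence (fun _ => 1) (fun n => ?_)
    (integrable_const 1) (fun n => ae_of_all _ fun x => ?_)
    (ae_of_all _ fun x => tendsto_exp_neg_mul_sum_range (ha₀ · x) hν)
  · exact Measurable.aestronglyMeasurable (by fun_prop)
  · have : 0 ≤ ν * ∑ k ∈ Finset.range n, a k x :=
      mul_nonneg hν.le (Finset.sum_nonneg fun k _ => ha₀ k x)
    rw [Real.norm_of_nonneg (Real.exp_pos _).le, Real.exp_le_one_iff]
    linarith

lemma multipliable_div_add_of_summable_one_div {ι : Type*} {lam : ι → ℝ} (hpos : ∀ k, 0 < lam k)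
    (hsum : Summable fun k => 1 / lam k) {ν : ℝ} (hν : 0 ≤ ν) :
    Multipliable fun k => lam k / (lam k + ν) := by
  have hterm (k : ι) : lam k / (lam k + ν) = 1 + -(ν / (lam k + ν)) := by
    have := hpos k
    field_simp
    ring
  simp_rw [hterm]
  refine Real.multipliable_one_add_of_summable (Summable.neg ?_)
  refine (hsum.mul_left ν).of_nonneg_of_le (fun k => div_nonneg hν (by linarith [hpos k]))
    fun k => ?_
  rw [mul_one_div]
  exact div_le_div_of_nonneg_left hν (hpos k) (by linarith)

namespace MeasureTheory

variable {ι : Type*} {X : ι → Type*} [∀ i, MeasurableSpace (X i)]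
  (μ : ∀ i, Measure (X i)) [∀ i, IsProbabilityMeasure (μ i)]

lemma integral_prod_eval_infinitePi (s : Finset ι) {f : ∀ i, X i → ℝ}
    (hf : ∀ i, Measurable (f i)) :
    ∫ ω, ∏ i ∈ s, f i (ω i) ∂Measure.infinitePi μ = ∏ i ∈ s, ∫ x, f i x ∂μ i := by
  simp_rw [← Finset.prod_coe_sort s]
  rw [← integral_fintype_prod_eq_prod (fun i : s => f i), ← integral_restrict_infinitePi μ]
  · rfl
  · exact Measurable.aestronglyMeasurable (by fun_prop)

lemma integral_comp_eval_infinitePi (i : ι) {f : X i → ℝ} (hf : Measurable f) :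
    ∫ ω, f (ω i) ∂Measure.infinitePi μ = ∫ x, f x ∂μ i := by
  rw [← Measure.infinitePi_map_eval μ i,
    integral_map (measurable_pi_apply i).aemeasurable hf.aestronglyMeasurable]

end MeasureTheory

lemma integrable_sq_norm_eval_infinitePi_stdComplexGaussian {ι : Type*} (k : ι) :
    Integrable (fun ω : ι → ℂ => ‖ω k‖ ^ 2) (Measure.infinitePi fun _ => stdComplexGaussian) :=
  (measurePreserving_eval_infinitePi _ k).integrable_comp_of_integrable
    (g := fun z => ‖z‖ ^ 2) integrable_sq_norm_stdComplexGaussian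

lemma integral_sq_norm_eval_infinitePi_stdComplexGaussian {ι : Type*} (k : ι) :
    ∫ ω, ‖ω k‖ ^ 2 ∂(Measure.infinitePi fun _ : ι => stdComplexGaussian) = 1 := by
  rw [integral_comp_eval_infinitePi _ k (f := fun z => ‖z‖ ^ 2) (by fun_prop),
    integral_sq_norm_stdComplexGaussian]

lemma integral_exp_neg_mul_sum_sq_norm_div_infinitePi {ι : Type*} {lam : ι → ℝ}
    (hpos : ∀ k, 0 < lam k) {ν : ℝ} (hν : 0 ≤ ν) (s : Finset ι) :
    ∫ ω, rexp (-ν * ∑ k ∈ s, ‖ω k‖ ^ 2 / lam k) ∂(Measure.infinitePi fun _ => stdComplexGaussian)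
      = ∏ k ∈ s, lam k / (lam k + ν) := by
  have hsplit (ω : ι → ℂ) : rexp (-ν * ∑ k ∈ s, ‖ω k‖ ^ 2 / lam k)
      = ∏ k ∈ s, rexp (-(ν / lam k) * ‖ω k‖ ^ 2) := by
    rw [Finset.mul_sum, Real.exp_sum]
    congr! 2 with k
    ring
  simp_rw [hsplit]
  rw [integral_prod_eval_infinitePi _ s (f := fun k z => rexp (-(ν / lam k) * ‖z‖ ^ 2))
    fun k => by fun_prop]
  refine Finset.prod_congr rfl fun k _ => ?_
  have := hpos k
  rw [integral_exp_neg_mul_sq_norm_stdComplexGaussian (by linarith [div_nonneg hν this.le])]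
  field_simp

theorem integral_exp_neg_nu_mass_general (lam : ℕ → ℝ) (hpos : ∀ k, 0 < lam k)
    (hsum : Summable fun k => 1 / lam k) (ν : ℝ) (hν : 0 < ν)
    (μ : Measure (ℕ → ℂ))
    (hμ : ∀ (s : Finset ℕ) (A : ℕ → Set ℂ), (∀ k, MeasurableSet (A k)) →
      μ {ω | ∀ k ∈ s, ω k ∈ A k} = ∏ k ∈ s, stdComplexGaussian (A k)) :
    (∀ᵐ ω ∂μ, Summable fun k => ‖ω k‖ ^ 2 / lam k) ∧
    (∫ ω, (if Summable (fun k => ‖ω k‖ ^ 2 / lam k)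
        then Real.exp (-ν * ∑' k, ‖ω k‖ ^ 2 / lam k) else 0) ∂μ)
      = ∏' k, lam k / (lam k + ν) := by
  obtain rfl : μ = Measure.infinitePi fun _ => stdComplexGaussian := Measure.eq_infinitePi _ hμ
  have hmass₀ (k : ℕ) (ω : ℕ → ℂ) : 0 ≤ ‖ω k‖ ^ 2 / lam k := div_nonneg (sq_nonneg _) (hpos k).le
  refine ⟨ae_summable_of_summable_integral hmass₀
    (fun k => (integrable_sq_norm_eval_infinitePi_stdComplexGaussian k).div_const _)
    (by simpa only [integral_div, integral_sq_norm_eval_infinitePi_stdComplexGaussian] using hsum),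
    ?_⟩
  refine tendsto_nhds_unique
    (tendsto_integral_exp_neg_mul_sum_range hmass₀ (fun k => by fun_prop) hν) ?_
  simp_rw [integral_exp_neg_mul_sum_sq_norm_div_infinitePi hpos hν.le]
  exact (multipliable_div_add_of_summable_one_div hpos hsum hν.le).hasProd.tendsto_prod_nat

/-- Let `(λ k)` be positive reals with `∑ 1/λ k < ∞` and `ν > 0`. Let `μ` be the product
on `ℂ^ℕ` (with the product σ-algebra) of standard complex Gaussians, characterized by its
values on cylinder sets. Then `𝒩(ω) = ∑ₖ |ωₖ|²/λₖ` converges `μ`-a.s., and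
`∫ e^{-ν𝒩} dμ = ∏ₖ λₖ/(λₖ+ν)` (the integrand being interpreted as `0` where the sum
diverges). -/
theorem integral_exp_neg_nu_mass (lam : ℕ → ℝ) (hpos : ∀ k, 0 < lam k)
    (hsum : Summable fun k => 1 / lam k) (ν : ℝ) (hν : 0 < ν)
    (μ : Measure (ℕ → ℂ)) [IsProbabilityMeasure μ]
    (hμ : ∀ (s : Finset ℕ) (A : ℕ → Set ℂ), (∀ k, MeasurableSet (A k)) →
      μ {ω | ∀ k ∈ s, ω k ∈ A k} = ∏ k ∈ s, stdComplexGaussian (A k)) :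
    (∀ᵐ ω ∂μ, Summable fun k => ‖ω k‖ ^ 2 / lam k) ∧
    (∫ ω, (if Summable (fun k => ‖ω k‖ ^ 2 / lam k)
        then Real.exp (-ν * ∑' k, ‖ω k‖ ^ 2 / lam k) else 0) ∂μ)
      = ∏' k, lam k / (lam k + ν) :=
  integral_exp_neg_nu_mass_general lam hpos hsum ν hν μ hμ
end

section
/- Let Ω = ℂ ∖ [0,∞), let I be a nonempty set, and let C > 0. For each n ∈ ℕ and ξ ∈ I let β_n^ξ : Ω → ℂ be analytic. Assume: (a) |β_n^ξ(ζ)| ≤ C/|Im ζ| for all n ∈ ℕ, ξ ∈ I and all ζ ∈ Ω with Im ζ ≠ 0; (b) for every ζ ∈ Ω with Re ζ < 0, sup_{ξ∈I} |β_n^ξ(ζ)| → 0 as n → ∞. Then for every ζ ∈ Ω, sup_{ξ∈I} |β_n^ξ(ζ)| → 0 as n → ∞. -/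
/-!
The family is studied as one family `(n, ξ) ↦ β n ξ` indexed by `ℕ × I` along the filter
`atTop ×ˢ ⊤`, so that convergence along this filter is exactly convergence uniform in `ξ`.

Let `U` be the open half-plane of `Ω` containing `ζ`. There the bound `C / |Im z|` makes the
family locally uniformly bounded, hence by the Cauchy estimate locally equi-Lipschitz, so the
pointwise convergence on `{Re z < 0} ∩ U` is uniform on a small disc. Uniform convergence on a
circle `|z - c| = r` makes every Taylor coefficient at `c` tend to `0`; since a bound `M` on a
larger disc of radius `R` bounds the `k`-th coefficient by `M / R ^ k`, Tannery's theorem gives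
uniform convergence on every disc of radius `ρ < R` about `c`. So the set of points near which
the convergence is uniform is open, nonempty and relatively closed in the connected set `U`.
-/

open Filter Topology Metric Set
open scoped Nat

theorem EquicontinuousOn.tendstoUniformlyOn_of_tendsto {ι X α : Type*} [TopologicalSpace X]
    [UniformSpace α] {F : ι → X → α} {f : X → α} {l : Filter ι} {K : Set X}
    (hK : IsCompact K) (hF : EquicontinuousOn F K)
    (h : ∀ x ∈ K, Tendsto (F · x) l (𝓝 (f x))) : TendstoUniformlyOn F f l K := by
  have hpi : Tendsto ((⋃₀ {K}).domRestrict ∘ F) l (𝓝 ((⋃₀ {K}).domRestrict f)) :=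
    tendsto_pi_nhds.2 fun x => h x (by simpa using x.2)
  have := (EquicontinuousOn.tendsto_uniformOnFun_iff_pi' (𝔖 := {K}) (by simpa using hK)
    (by simpa using hF) l f).2 hpi
  exact UniformOnFun.tendsto_iff_tendstoUniformlyOn.1 this K rfl

theorem tendstoUniformlyOn_zero_iff_tendsto {ι α E : Type*} [SeminormedAddCommGroup E]
    {F : ι → α → E} {l : Filter ι} {s : Set α} :
    TendstoUniformlyOn F 0 l s ↔ Tendsto (fun q : ι × α => F q.1 q.2) (l ×ˢ 𝓟 s) (𝓝 0) := by
  simp only [Metric.tendstoUniformlyOn_iff, Metric.tendsto_nhds, eventually_prod_principal_iff,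
    Pi.zero_apply, dist_comm (0 : E)]

theorem tendsto_prod_top_nhds_zero_iff {ι E : Type*} [SeminormedAddCommGroup E]
    {u : ℕ → ι → E} :
    Tendsto (fun p : ℕ × ι => u p.1 p.2) (atTop ×ˢ ⊤) (𝓝 0) ↔
      ∀ η : ℝ, 0 < η → ∃ N : ℕ, ∀ n ≥ N, ∀ ξ, ‖u n ξ‖ ≤ η := by
  rw [(atTop_basis.prod hasBasis_top).tendsto_iff nhds_basis_closedBall]
  simp only [true_and, mem_prod, mem_Ici, mem_univ, and_true, mem_closedBall, dist_zero_right,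
    Prod.forall, Prod.exists, exists_const, ge_iff_le]
  exact forall₂_congr fun η hη => exists_congr fun N =>
    ⟨fun h n hn ξ => h n ξ hn, fun h n ξ hn => h n hn ξ⟩

section Complex

variable {ι E : Type*} [NormedAddCommGroup E] [NormedSpace ℂ E]

theorem lipschitzOnWith_closedBall_of_norm_le {f : ℂ → E} {c : ℂ} {ρ R M : ℝ} (hρR : ρ < R)
    (hf : DifferentiableOn ℂ f (closedBall c R)) (hM : ∀ z ∈ closedBall c R, ‖f z‖ ≤ M) :
    LipschitzOnWith (M / (R - ρ)).toNNReal f (closedBall c ρ) := by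
  have hball : ∀ x ∈ closedBall c ρ, closedBall x (R - ρ) ⊆ closedBall c R := fun x hx =>
    closedBall_subset_closedBall' (by linarith [mem_closedBall.1 hx])
  refine (convex_closedBall c ρ).lipschitzOnWith_of_nnnorm_deriv_le (fun x hx => ?_)
    (fun x hx => ?_)
  · exact hf.differentiableAt (closedBall_mem_nhds_of_mem (by
      simpa using (mem_closedBall.1 hx).trans_lt hρR))
  · rw [← NNReal.coe_le_coe, coe_nnnorm]
    refine (Complex.norm_deriv_le_of_forall_mem_sphere_norm_le (sub_pos.2 hρR) ?_
      fun z hz => hM z (hball x hx (sphere_subset_closedBall hz))).trans (Real.le_coe_toNNReal _)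
    exact (hf.mono (closure_ball_subset_closedBall.trans (hball x hx))).diffContOnCl

variable {l : Filter ι} {f : ι → ℂ → E}

theorem tendstoUniformlyOn_closedBall_of_tendsto {w : ℂ} {R M : ℝ} (hR : 0 < R)
    (hf : ∀ i, DifferentiableOn ℂ (f i) (closedBall w R))
    (hM : ∀ i, ∀ z ∈ closedBall w R, ‖f i z‖ ≤ M)
    (hlim : ∀ z ∈ closedBall w R, Tendsto (f · z) l (𝓝 0)) :
    TendstoUniformlyOn f 0 l (closedBall w (R / 2)) := by
  have hequi : EquicontinuousOn f (closedBall w (R / 2)) :=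
    (LipschitzOnWith.uniformEquicontinuousOn f _ fun i =>
      lipschitzOnWith_closedBall_of_norm_le (half_lt_self hR) (hf i) (hM i)).equicontinuousOn
  exact hequi.tendstoUniformlyOn_of_tendsto (isCompact_closedBall w _)
    fun z hz => hlim z (closedBall_subset_closedBall (half_le_self hR.le) hz)

variable [CompleteSpace E] {c : ℂ}

theorem tendsto_iteratedDeriv_of_tendstoUniformlyOn_sphere {r : ℝ} (hr : 0 < r)
    (hf : ∀ i, DifferentiableOn ℂ (f i) (closedBall c r))
    (h : TendstoUniformlyOn f 0 l (sphere c r)) (k : ℕ) :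
    Tendsto (fun i => iteratedDeriv k (f i) c) l (𝓝 0) := by
  rw [NormedAddGroup.tendsto_nhds_zero]
  intro ε hε
  have hδ : 0 < ε * r ^ k / (2 * k !) := by positivity
  filter_upwards [Metric.tendstoUniformlyOn_iff.1 h _ hδ] with i hi
  calc ‖iteratedDeriv k (f i) c‖ ≤ k ! * (ε * r ^ k / (2 * k !)) / r ^ k :=
        Complex.norm_iteratedDeriv_le_of_forall_mem_sphere_norm_le k hr
          ((hf i).mono closure_ball_subset_closedBall).diffContOnCl
          fun z hz => by simpa using (hi z hz).le
    _ = ε / 2 := by field_simp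
    _ < ε := half_lt_self hε

theorem TendstoUniformlyOn.closedBall_of_sphere {r ρ R M : ℝ} (hr : 0 < r) (hrR : r ≤ R)
    (hρ : 0 ≤ ρ) (hρR : ρ < R) (hf : ∀ i, DifferentiableOn ℂ (f i) (closedBall c R))
    (hM : ∀ i, ∀ z ∈ sphere c R, ‖f i z‖ ≤ M) (h : TendstoUniformlyOn f 0 l (sphere c r)) :
    TendstoUniformlyOn f 0 l (closedBall c ρ) := by
  have hR : 0 < R := hr.trans_le hrR
  set T : ι × ℂ → ℕ → E := fun q k => (k ! : ℂ)⁻¹ • (q.2 - c) ^ k • iteratedDeriv k (f q.1) c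
  have hnormT : ∀ i, ∀ z ∈ closedBall c ρ, ∀ k,
      ‖T (i, z) k‖ ≤ (k ! : ℝ)⁻¹ * ρ ^ k * ‖iteratedDeriv k (f i) c‖ := by
    intro i z hz k
    simp only [T, norm_smul, norm_inv, norm_pow, Complex.norm_natCast, ← mul_assoc]
    gcongr
    exact mem_closedBall_iff_norm.1 hz
  have hcoef := tendsto_iteratedDeriv_of_tendstoUniformlyOn_sphere hr
    (fun i => (hf i).mono (closedBall_subset_closedBall hrR)) h
  have hterm : ∀ k, Tendsto (T · k) (l ×ˢ 𝓟 (closedBall c ρ)) (𝓝 0) := fun k =>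
    squeeze_zero_norm' (eventually_prod_principal_iff.2 (.of_forall fun i z hz => hnormT i z hz k))
      (by simpa using (((hcoef k).comp tendsto_fst).norm.const_mul ((k ! : ℝ)⁻¹ * ρ ^ k)))
  have hdom : ∀ᶠ q in l ×ˢ 𝓟 (closedBall c ρ), ∀ k, ‖T q k‖ ≤ M * (ρ / R) ^ k := by
    refine eventually_prod_principal_iff.2 (.of_forall fun i z hz k => (hnormT i z hz k).trans ?_)
    have := Complex.norm_iteratedDeriv_le_of_forall_mem_sphere_norm_le k hR
      ((hf i).mono closure_ball_subset_closedBall).diffContOnCl (hM i)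
    calc (k ! : ℝ)⁻¹ * ρ ^ k * ‖iteratedDeriv k (f i) c‖
        ≤ (k ! : ℝ)⁻¹ * ρ ^ k * (k ! * M / R ^ k) := by gcongr
      _ = M * (ρ / R) ^ k := by rw [div_pow]; field_simp
  have hsum := tendsto_tsum_of_dominated_convergence
    ((summable_geometric_of_lt_one (by positivity) ((div_lt_one hR).2 hρR)).mul_left M) hterm hdom
  rw [tsum_zero] at hsum
  refine tendstoUniformlyOn_zero_iff_tendsto.2 (hsum.congr' ?_)
  refine eventually_prod_principal_iff.2 (.of_forall fun i z hz => ?_)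
  exact (Complex.hasSum_taylorSeries_on_ball ((hf i).mono ball_subset_closedBall)
    (mem_ball.2 ((mem_closedBall.1 hz).trans_lt hρR))).tsum_eq

theorem tendstoUniformlyOn_ball_of_tendstoUniformlyOn_nearby_ball {w w' : ℂ} {r R M : ℝ}
    (hR : 0 < R) (hf : ∀ i, DifferentiableOn ℂ (f i) (closedBall w R))
    (hM : ∀ i, ∀ z ∈ closedBall w R, ‖f i z‖ ≤ M) (hw' : dist w' w < R / 8) (hr : 0 < r)
    (h : TendstoUniformlyOn f 0 l (ball w' r)) :
    TendstoUniformlyOn f 0 l (ball w (R / 8)) := by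
  have hsub : closedBall w' (R / 2) ⊆ closedBall w R :=
    closedBall_subset_closedBall' (by linarith)
  have hr' : 0 < min (r / 2) (R / 2) := by positivity
  have hsphere : sphere w' (min (r / 2) (R / 2)) ⊆ ball w' r := fun z hz => by
    rw [mem_sphere] at hz
    exact mem_ball.2 (by linarith [min_le_left (r / 2) (R / 2)])
  refine (TendstoUniformlyOn.closedBall_of_sphere (ρ := R / 4) hr' (min_le_right _ _)
    (by positivity) (by linarith) (fun i => (hf i).mono hsub)
    (fun i z hz => hM i z (hsub (sphere_subset_closedBall hz))) (h.mono hsphere)).mono ?_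
  exact ball_subset_closedBall.trans' (ball_subset_ball' (by linarith [dist_comm w' w]))

theorem tendstoLocallyUniformlyOn_zero_of_eventually_tendsto {U : Set ℂ} (hUo : IsOpen U)
    (hUc : IsPreconnected U) (hf : ∀ i, DifferentiableOn ℂ (f i) U)
    (hbdd : ∀ w ∈ U, ∃ t ∈ 𝓝 w, ∃ M, ∀ i, ∀ z ∈ t, ‖f i z‖ ≤ M)
    (hlim : ∃ w ∈ U, ∀ᶠ z in 𝓝 w, Tendsto (f · z) l (𝓝 0)) :
    TendstoLocallyUniformlyOn f 0 l U := by
  set u := {w | ∃ r > 0, TendstoUniformlyOn f 0 l (ball w r)}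
  have hball : ∀ w ∈ U, ∀ s ∈ 𝓝 w, ∃ R > 0, ∃ M, closedBall w R ⊆ U ∩ s ∧
      ∀ i, ∀ z ∈ closedBall w R, ‖f i z‖ ≤ M := by
    intro w hw s hs
    obtain ⟨t, ht, M, hM⟩ := hbdd w hw
    obtain ⟨R, hR, hRsub⟩ := nhds_basis_closedBall.mem_iff.1
      (inter_mem (hUo.mem_nhds hw) (inter_mem hs ht))
    exact ⟨R, hR, M, fun z hz => ⟨(hRsub hz).1, (hRsub hz).2.1⟩,
      fun i z hz => hM i z (hRsub hz).2.2⟩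
  have hu_open : IsOpen u := by
    refine isOpen_iff.2 fun w ⟨r, hr, h⟩ => ⟨r, hr, fun w' hw' => ?_⟩
    exact ⟨r - dist w' w, sub_pos.2 hw', h.mono (ball_subset_ball' (by linarith))⟩
  have hu_nonempty : (U ∩ u).Nonempty := by
    obtain ⟨w, hw, hlim⟩ := hlim
    obtain ⟨R, hR, M, hsub, hM⟩ := hball w hw _ hlim
    exact ⟨w, hw, R / 2, by positivity, (tendstoUniformlyOn_closedBall_of_tendsto hR
      (fun i => (hf i).mono fun z hz => (hsub hz).1) hM fun z hz => (hsub hz).2).mono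
      ball_subset_closedBall⟩
  have hu_closed : closure u ∩ U ⊆ u := by
    rintro w ⟨hwu, hw⟩
    obtain ⟨R, hR, M, hsub, hM⟩ := hball w hw univ univ_mem
    obtain ⟨w', ⟨r, hr, h⟩, hw'⟩ := mem_closure_iff.1 hwu (R / 8) (by positivity)
    exact ⟨R / 8, by positivity, tendstoUniformlyOn_ball_of_tendstoUniformlyOn_nearby_ball hR
      (fun i => (hf i).mono fun z hz => (hsub hz).1) hM (by rwa [dist_comm]) hr h⟩
  have hUu := hUc.subset_of_closure_inter_subset hu_open hu_nonempty hu_closed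
  refine tendstoLocallyUniformlyOn_of_forall_exists_nhds fun w hw => ?_
  obtain ⟨r, hr, h⟩ := hUu hw
  exact ⟨ball w r, mem_nhdsWithin_of_mem_nhds (ball_mem_nhds w hr), h⟩

end Complex

theorem exists_nhds_norm_le_of_norm_le_div_abs_im {ι E : Type*} [Norm E] {f : ι → ℂ → E}
    {C : ℝ} (hC : 0 ≤ C) (hbound : ∀ i z, z.im ≠ 0 → ‖f i z‖ ≤ C / |z.im|) {w : ℂ}
    (hw : w.im ≠ 0) : ∃ t ∈ 𝓝 w, ∃ M, ∀ i, ∀ z ∈ t, ‖f i z‖ ≤ M := by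
  have hw' : 0 < |w.im| / 2 := by positivity
  refine ⟨closedBall w (|w.im| / 2), closedBall_mem_nhds w hw', C / (|w.im| / 2),
    fun i z hz => ?_⟩
  have him : |w.im| / 2 ≤ |z.im| := by
    have h₁ : |w.im - z.im| ≤ dist z w := by
      simpa [Complex.dist_eq, abs_sub_comm] using Complex.abs_im_le_norm (z - w)
    linarith [abs_sub_abs_le_abs_sub w.im z.im, mem_closedBall.1 hz]
  exact (hbound i z (abs_pos.1 (hw'.trans_le him))).trans (div_le_div_of_nonneg_left hC hw' him)

theorem uniform_convergence_on_slit_plane_general {I : Type*} (C : ℝ) (hC : 0 < C)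
    (β : ℕ → I → ℂ → ℂ)
    (hanal : ∀ n ξ, DifferentiableOn ℂ (β n ξ) {ζ : ℂ | ¬(ζ.im = 0 ∧ 0 ≤ ζ.re)})
    (hbound : ∀ n ξ (ζ : ℂ), ζ.im ≠ 0 → ‖β n ξ ζ‖ ≤ C / |ζ.im|)
    (hconv : ∀ ζ : ℂ, ¬(ζ.im = 0 ∧ 0 ≤ ζ.re) → ζ.re < 0 →
      ∀ η : ℝ, 0 < η → ∃ N : ℕ, ∀ n ≥ N, ∀ ξ, ‖β n ξ ζ‖ ≤ η) :
    ∀ ζ : ℂ, ¬(ζ.im = 0 ∧ 0 ≤ ζ.re) →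
      ∀ η : ℝ, 0 < η → ∃ N : ℕ, ∀ n ≥ N, ∀ ξ, ‖β n ξ ζ‖ ≤ η := by
  intro ζ hζ
  by_cases hre : ζ.re < 0
  · exact hconv ζ hζ hre
  have him : 0 < ζ.im * ζ.im := mul_self_pos.2 fun h => hζ ⟨h, not_lt.1 hre⟩
  set U := {z : ℂ | 0 < ζ.im * z.im}
  have hU_open : IsOpen U := isOpen_lt continuous_const (by fun_prop)
  have hU_convex : Convex ℝ U :=
    convex_halfSpace_gt ⟨fun x y => by simp [mul_add], fun c x => by simp; ring⟩ 0
  have hU_im : ∀ z ∈ U, z.im ≠ 0 := fun z hz h => by simp [U, h] at hz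
  have hlim : TendstoLocallyUniformlyOn (fun p : ℕ × I => β p.1 p.2) 0 (atTop ×ˢ ⊤) U := by
    refine tendstoLocallyUniformlyOn_zero_of_eventually_tendsto hU_open
      hU_convex.isPreconnected (fun p => (hanal p.1 p.2).mono fun z hz h => hU_im z hz h.1)
      (fun w hw => exists_nhds_norm_le_of_norm_le_div_abs_im hC.le
        (fun p : ℕ × I => hbound p.1 p.2) (hU_im w hw)) ⟨⟨-1, ζ.im⟩, him, ?_⟩
    filter_upwards [hU_open.mem_nhds him,
      (isOpen_lt Complex.continuous_re continuous_const).mem_nhds (show (-1 : ℝ) < 0 by norm_num)]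
      with z hzU hzre
    exact tendsto_prod_top_nhds_zero_iff.2 (hconv z (fun h => hU_im z hzU h.1) hzre)
  exact tendsto_prod_top_nhds_zero_iff.1 (hlim.tendsto_at him)

/-- Let `Ω = ℂ ∖ [0,∞)`, `I` a nonempty set, `C > 0`. Let `β n ξ : Ω → ℂ` be analytic
(complex differentiable on the open connected set `Ω`), satisfying
(a) `|β n ξ ζ| ≤ C/|Im ζ|` whenever `Im ζ ≠ 0`;
(b) for every `ζ ∈ Ω` with `Re ζ < 0`, `sup_ξ |β n ξ ζ| → 0` as `n → ∞`.
Then for every `ζ ∈ Ω`, `sup_ξ |β n ξ ζ| → 0` as `n → ∞`.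
(Uniform-in-`ξ` convergence to `0` is expressed in ε-N form.) -/
theorem uniform_convergence_on_slit_plane {I : Type*} [Nonempty I] (C : ℝ) (hC : 0 < C)
    (β : ℕ → I → ℂ → ℂ)
    (hanal : ∀ n ξ, DifferentiableOn ℂ (β n ξ) {ζ : ℂ | ¬(ζ.im = 0 ∧ 0 ≤ ζ.re)})
    (hbound : ∀ n ξ (ζ : ℂ), ζ.im ≠ 0 → ‖β n ξ ζ‖ ≤ C / |ζ.im|)
    (hconv : ∀ ζ : ℂ, ¬(ζ.im = 0 ∧ 0 ≤ ζ.re) → ζ.re < 0 →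
      ∀ η : ℝ, 0 < η → ∃ N : ℕ, ∀ n ≥ N, ∀ ξ, ‖β n ξ ζ‖ ≤ η) :
    ∀ ζ : ℂ, ¬(ζ.im = 0 ∧ 0 ≤ ζ.re) →
      ∀ η : ℝ, 0 < η → ∃ N : ℕ, ∀ n ≥ N, ∀ ξ, ‖β n ξ ζ‖ ≤ η :=
  uniform_convergence_on_slit_plane_general C hC β hanal hbound hconv
end

section
/- Let b ∈ (1/2, 1) and ψ ∈ C_c^∞(ℝ). There exist constants C₁ = C₁(b,ψ) and C₂ = C₂(ψ) such that for every integer l ≥ 0 and every δ ∈ (0,1), the function ψ_l(y) = y^l ψ(y) satisfies δ² ∫_ℝ |ψ̂_l(δη)|² (1+|η|)^{2b} dη ≤ C₁ C₂^l δ^{1−2b}. -/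
open MeasureTheory

open Real FourierTransform

lemma ft_decay (g : ℝ → ℂ) (hg : ContDiff ℝ (⊤ : ℕ∞) g) (hgc : HasCompactSupport g) (ξ : ℝ) :
    (2 * π * ξ) ^ 2 * ‖𝓕 g ξ‖ ≤ ∫ y : ℝ, ‖deriv (deriv g) y‖ := by
  have hgi : Integrable g := hg.continuous.integrable_of_hasCompactSupport hgc
  have hg' : ContDiff ℝ (⊤ : ℕ∞) (deriv g) := (contDiff_infty_iff_deriv.mp hg).2
  have hg'i : Integrable (deriv g) := hg'.continuous.integrable_of_hasCompactSupport hgc.deriv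
  have hg''i : Integrable (deriv (deriv g)) :=
    ((contDiff_infty_iff_deriv.mp hg').2).continuous.integrable_of_hasCompactSupport hgc.deriv.deriv
  have h1 := Real.fourier_deriv hgi (hg.differentiable (by norm_num)) hg'i
  have h2 := Real.fourier_deriv hg'i (hg'.differentiable (by norm_num)) hg''i
  have key : ‖𝓕 (deriv (deriv g)) ξ‖ = (2*π*ξ)^2 * ‖𝓕 g ξ‖ := by
    rw [h2]
    simp only [h1]
    rw [smul_eq_mul, smul_eq_mul, ← mul_assoc, norm_mul, norm_mul]
    have : ‖(2 * ↑π * Complex.I * (ξ:ℂ))‖ = 2 * π * |ξ| := by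
      simp [norm_mul, abs_of_pos pi_pos]
    rw [this]
    rw [mul_pow, mul_pow, ← sq_abs ξ]
    ring
  rw [← key]
  exact VectorFourier.norm_fourierIntegral_le_integral_norm _ _ _ _ _
lemma deriv_g (ψ : ℝ → ℂ) (hψ : ContDiff ℝ (⊤ : ℕ∞) ψ) (l : ℕ) :
    deriv (fun y : ℝ => (y:ℂ) ^ l * ψ y) =
      fun y : ℝ => (l:ℂ) * (y:ℂ) ^ (l-1) * ψ y + (y:ℂ) ^ l * deriv ψ y := by
  ext y
  exact (((hasDerivAt_pow l ((y:ℝ):ℂ)).comp_ofReal).mul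
    ((hψ.differentiable (by norm_num) y).hasDerivAt)).deriv

lemma deriv2_g (ψ : ℝ → ℂ) (hψ : ContDiff ℝ (⊤ : ℕ∞) ψ) (l : ℕ) :
    deriv (deriv (fun y : ℝ => (y:ℂ) ^ l * ψ y)) =
      fun y : ℝ => ((l:ℂ) * (((l-1:ℕ):ℂ) * (y:ℂ) ^ (l-1-1)) * ψ y
          + (l:ℂ) * (y:ℂ) ^ (l-1) * deriv ψ y)
        + (((l:ℂ) * (y:ℂ) ^ (l-1)) * deriv ψ y + (y:ℂ) ^ l * deriv (deriv ψ) y) := by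
  rw [deriv_g ψ hψ l]
  ext y
  have hψ' : ContDiff ℝ (⊤ : ℕ∞) (deriv ψ) := (contDiff_infty_iff_deriv.mp hψ).2
  have h1 : HasDerivAt (fun y : ℝ => (l:ℂ) * (y:ℂ) ^ (l-1) * ψ y)
      ((l:ℂ) * (((l-1:ℕ):ℂ) * (y:ℂ) ^ (l-1-1)) * ψ y + (l:ℂ) * (y:ℂ) ^ (l-1) * deriv ψ y) y :=
    ((hasDerivAt_pow (l-1) ((y:ℝ):ℂ)).comp_ofReal.const_mul (l:ℂ)).mul
      ((hψ.differentiable (by norm_num) y).hasDerivAt)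
  have h2 : HasDerivAt (fun y : ℝ => (y:ℂ) ^ l * deriv ψ y)
      (((l:ℂ) * (y:ℂ) ^ (l-1)) * deriv ψ y + (y:ℂ) ^ l * deriv (deriv ψ) y) y :=
    ((hasDerivAt_pow l ((y:ℝ):ℂ)).comp_ofReal).mul ((hψ'.differentiable (by norm_num) y).hasDerivAt)
  exact (h1.add h2).deriv

lemma pointwise_bounds (ψ : ℝ → ℂ) (hψ : ContDiff ℝ (⊤ : ℕ∞) ψ) (R : ℝ) (hR : 1 ≤ R)
    (hRs : tsupport ψ ⊆ Set.Icc (-R) R) (l : ℕ) (y : ℝ) :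
    ‖(y:ℂ) ^ l * ψ y‖ ≤ 4 ^ l * R ^ l * (‖ψ y‖ + 2 * ‖deriv ψ y‖ + ‖deriv (deriv ψ) y‖) ∧
    ‖deriv (deriv (fun y : ℝ => (y:ℂ) ^ l * ψ y)) y‖
      ≤ 4 ^ l * R ^ l * (‖ψ y‖ + 2 * ‖deriv ψ y‖ + ‖deriv (deriv ψ) y‖) := by
  have hl2 : (l:ℝ) ≤ 2 ^ l := by exact_mod_cast (l.lt_two_pow_self).le
  have h4 : (0:ℝ) < 4 ^ l * R ^ l :=
    mul_pos (pow_pos (by norm_num) l) (pow_pos (by linarith) l)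
  rw [deriv2_g ψ hψ l]
  by_cases hy : |y| ≤ R
  · have hyk : ∀ k : ℕ, k ≤ l → |y| ^ k ≤ R ^ l := fun k hk =>
      (pow_le_pow_left₀ (abs_nonneg y) hy k).trans (pow_le_pow_right₀ hR hk)
    have hll : (l:ℝ) * ((l-1:ℕ):ℝ) ≤ 4 ^ l := by
      have h2 : ((l-1:ℕ):ℝ) ≤ 2 ^ l := by
        calc ((l-1:ℕ):ℝ) ≤ (l:ℝ) := by exact_mod_cast Nat.sub_le l 1
        _ ≤ 2 ^ l := hl2
      calc (l:ℝ) * ((l-1:ℕ):ℝ) ≤ 2 ^ l * 2 ^ l :=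
        mul_le_mul hl2 h2 (by positivity) (by positivity)
      _ = 4 ^ l := by rw [← mul_pow]; norm_num
    have h1l : (1:ℝ) ≤ 4 ^ l := one_le_pow₀ (by norm_num)
    constructor
    · rw [norm_mul, norm_pow, Complex.norm_real, Real.norm_eq_abs]
      calc |y| ^ l * ‖ψ y‖ = 1 * |y| ^ l * ‖ψ y‖ := by ring
      _ ≤ 4 ^ l * R ^ l * (‖ψ y‖ + 2 * ‖deriv ψ y‖ + ‖deriv (deriv ψ) y‖) := by
        gcongr
        nlinarith [norm_nonneg (deriv ψ y), norm_nonneg (deriv (deriv ψ) y)]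
    · have e1 : ‖(l:ℂ) * (((l-1:ℕ):ℂ) * (y:ℂ) ^ (l-1-1)) * ψ y‖
          ≤ 4 ^ l * R ^ l * ‖ψ y‖ := by
        rw [norm_mul, norm_mul, norm_mul, norm_pow, Complex.norm_real, Complex.norm_natCast,
          Complex.norm_natCast, Real.norm_eq_abs]
        calc (l:ℝ) * (((l-1:ℕ):ℝ) * |y| ^ (l-1-1)) * ‖ψ y‖
            = ((l:ℝ) * ((l-1:ℕ):ℝ)) * |y| ^ (l-1-1) * ‖ψ y‖ := by ring
          _ ≤ 4 ^ l * R ^ l * ‖ψ y‖ := by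
              gcongr
              exact hyk (l-1-1) ((Nat.sub_le _ _).trans (Nat.sub_le _ _))
      have e2 : ‖(l:ℂ) * (y:ℂ) ^ (l-1) * deriv ψ y‖ ≤ 4 ^ l * R ^ l * ‖deriv ψ y‖ := by
        rw [norm_mul, norm_mul, norm_pow, Complex.norm_real, Complex.norm_natCast,
          Real.norm_eq_abs]
        have h2 : (l:ℝ) ≤ 4 ^ l := hl2.trans (pow_le_pow_left₀ (by norm_num) (by norm_num) l)
        gcongr
        exact hyk (l-1) (Nat.sub_le _ _)
      have e3 : ‖(y:ℂ) ^ l * deriv (deriv ψ) y‖ ≤ 4 ^ l * R ^ l * ‖deriv (deriv ψ) y‖ := by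
        rw [norm_mul, norm_pow, Complex.norm_real, Real.norm_eq_abs]
        calc |y| ^ l * ‖deriv (deriv ψ) y‖ = 1 * |y| ^ l * ‖deriv (deriv ψ) y‖ := by ring
        _ ≤ 4 ^ l * R ^ l * ‖deriv (deriv ψ) y‖ := by
          gcongr
      calc ‖_ + _‖ ≤ ‖(l:ℂ) * (((l-1:ℕ):ℂ) * (y:ℂ) ^ (l-1-1)) * ψ y
              + (l:ℂ) * (y:ℂ) ^ (l-1) * deriv ψ y‖
            + ‖((l:ℂ) * (y:ℂ) ^ (l-1)) * deriv ψ y + (y:ℂ) ^ l * deriv (deriv ψ) y‖ :=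
          norm_add_le _ _
        _ ≤ (‖(l:ℂ) * (((l-1:ℕ):ℂ) * (y:ℂ) ^ (l-1-1)) * ψ y‖
              + ‖(l:ℂ) * (y:ℂ) ^ (l-1) * deriv ψ y‖)
            + (‖((l:ℂ) * (y:ℂ) ^ (l-1)) * deriv ψ y‖ + ‖(y:ℂ) ^ l * deriv (deriv ψ) y‖) :=
          add_le_add (norm_add_le _ _) (norm_add_le _ _)
        _ ≤ 4 ^ l * R ^ l * (‖ψ y‖ + 2 * ‖deriv ψ y‖ + ‖deriv (deriv ψ) y‖) := by
          linarith [e1, e2, e3]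
  · have hns : y ∉ tsupport ψ := fun h => hy (abs_le.mpr ⟨(hRs h).1, (hRs h).2⟩)
    have h0 : ψ y = 0 := image_eq_zero_of_notMem_tsupport hns
    have h1 : deriv ψ y = 0 := by
      by_contra hne
      exact hns (support_deriv_subset (by simpa using hne))
    have h2 : deriv (deriv ψ) y = 0 := by
      by_contra hne
      have : y ∈ tsupport (deriv ψ) := support_deriv_subset (by simpa using hne)
      exact hns (closure_minimal support_deriv_subset (isClosed_tsupport ψ) this)
    simp [h0, h1, h2]

lemma ft_bound (ψ : ℝ → ℂ) (hψ : ContDiff ℝ (⊤ : ℕ∞) ψ) (hψc : HasCompactSupport ψ) :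
    ∃ K R : ℝ, 0 < K ∧ 1 ≤ R ∧ ∀ (l : ℕ) (ξ : ℝ),
      (1 + (2 * π * ξ) ^ 2) * ‖𝓕 (fun y : ℝ => (y:ℂ) ^ l * ψ y) ξ‖
        ≤ K * (4 * R) ^ l := by
  obtain ⟨r, hr⟩ := hψc.isBounded.subset_closedBall 0
  set R := max r 1 with hRdef
  have hR : 1 ≤ R := le_max_right _ _
  have hRs : tsupport ψ ⊆ Set.Icc (-R) R := by
    refine hr.trans ?_
    rw [Real.closedBall_eq_Icc]
    intro x hx
    simp only [Set.mem_Icc] at *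
    constructor <;> [linarith [hx.1, le_max_left r 1]; linarith [hx.2, le_max_left r 1]]
  set Φ : ℝ → ℝ := fun y => ‖ψ y‖ + 2 * ‖deriv ψ y‖ + ‖deriv (deriv ψ) y‖ with hΦdef
  have hψ' : ContDiff ℝ (⊤ : ℕ∞) (deriv ψ) := (contDiff_infty_iff_deriv.mp hψ).2
  have hψ'' : ContDiff ℝ (⊤ : ℕ∞) (deriv (deriv ψ)) := (contDiff_infty_iff_deriv.mp hψ').2
  have hΦi : Integrable Φ :=
    (((hψ.continuous.integrable_of_hasCompactSupport hψc).norm).add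
      (((hψ'.continuous.integrable_of_hasCompactSupport hψc.deriv).norm).const_mul 2)).add
      ((hψ''.continuous.integrable_of_hasCompactSupport hψc.deriv.deriv).norm)
  have hΦ0 : 0 ≤ ∫ y, Φ y := integral_nonneg fun y => by positivity
  refine ⟨2 * (∫ y, Φ y) + 1, R, by linarith, hR, fun l ξ => ?_⟩
  set g : ℝ → ℂ := fun y => (y:ℂ) ^ l * ψ y with hgdef
  have hgct : ContDiff ℝ (⊤ : ℕ∞) g := ((Complex.ofRealCLM.contDiff).pow l).mul hψ
  have hgc : HasCompactSupport g := hψc.mul_left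
  have hgi : Integrable g := hgct.continuous.integrable_of_hasCompactSupport hgc
  have hg''ct : ContDiff ℝ (⊤ : ℕ∞) (deriv (deriv g)) :=
    (contDiff_infty_iff_deriv.mp (contDiff_infty_iff_deriv.mp hgct).2).2
  have hg''i : Integrable (deriv (deriv g)) :=
    hg''ct.continuous.integrable_of_hasCompactSupport hgc.deriv.deriv
  have hB : (0:ℝ) ≤ 4 ^ l * R ^ l := by positivity
  have int1 : (∫ y, ‖g y‖) ≤ 4 ^ l * R ^ l * ∫ y, Φ y := by
    rw [← MeasureTheory.integral_const_mul]
    exact integral_mono hgi.norm (hΦi.const_mul _)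
      (fun y => (pointwise_bounds ψ hψ R hR hRs l y).1)
  have int2 : (∫ y, ‖deriv (deriv g) y‖) ≤ 4 ^ l * R ^ l * ∫ y, Φ y := by
    rw [← MeasureTheory.integral_const_mul]
    exact integral_mono hg''i.norm (hΦi.const_mul _)
      (fun y => (pointwise_bounds ψ hψ R hR hRs l y).2)
  have b1 : ‖𝓕 g ξ‖ ≤ 4 ^ l * R ^ l * ∫ y, Φ y :=
    (VectorFourier.norm_fourierIntegral_le_integral_norm _ _ _ _ _).trans int1
  have b2 : (2 * π * ξ) ^ 2 * ‖𝓕 g ξ‖ ≤ 4 ^ l * R ^ l * ∫ y, Φ y :=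
    (ft_decay g hgct hgc ξ).trans int2
  have h4R : (4 * R) ^ l = 4 ^ l * R ^ l := mul_pow 4 R l
  have hnn : 0 ≤ ‖𝓕 g ξ‖ := norm_nonneg _
  have h1 : (0:ℝ) ≤ (4*R)^l := by positivity
  calc (1 + (2 * π * ξ) ^ 2) * ‖𝓕 g ξ‖
      = ‖𝓕 g ξ‖ + (2 * π * ξ) ^ 2 * ‖𝓕 g ξ‖ := by ring
    _ ≤ 4 ^ l * R ^ l * (∫ y, Φ y) + 4 ^ l * R ^ l * (∫ y, Φ y) := add_le_add b1 b2
    _ = 2 * (∫ y, Φ y) * (4 * R) ^ l := by rw [h4R]; ring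
    _ ≤ (2 * (∫ y, Φ y) + 1) * (4 * R) ^ l := by nlinarith

noncomputable def FT1 (h : ℝ → ℂ) (η : ℝ) : ℂ :=
  ∫ t : ℝ, h t * Complex.exp (-(2 * (Real.pi : ℂ)) * Complex.I * (η : ℂ) * (t : ℂ))

lemma FT1_eq (h : ℝ → ℂ) (η : ℝ) : FT1 h η = 𝓕 h η := by
  rw [Real.fourier_real_eq_integral_exp_smul, FT1]
  congr 1; ext t
  rw [smul_eq_mul, mul_comm]
  congr 1
  push_cast
  ring_nf

/-- **Uniform-in-`l` bound for the cutoffs `ψ_l(y) = y^l ψ(y)`.** Let `b ∈ (1/2,1)` and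
`ψ ∈ C_c^∞(ℝ)`. There are `C₁ = C₁(b,ψ) > 0` and `C₂ = C₂(ψ) > 0` such that for every
integer `l ≥ 0` and every `δ ∈ (0,1)`,
`δ² ∫ |ψ̂_l(δη)|² (1+|η|)^{2b} dη ≤ C₁ C₂^l δ^{1-2b}`. -/
theorem psi_l_fourier_bound (b : ℝ) (hb : b ∈ Set.Ioo (1/2 : ℝ) 1)
    (ψ : ℝ → ℂ) (hψ : ContDiff ℝ (⊤ : ℕ∞) ψ) (hψc : HasCompactSupport ψ) :
    ∃ C₁ C₂ : ℝ, 0 < C₁ ∧ 0 < C₂ ∧ ∀ l : ℕ, ∀ δ : ℝ, δ ∈ Set.Ioo (0:ℝ) 1 →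
      (∫⁻ η : ℝ, ENNReal.ofReal
          (δ ^ 2 * ‖FT1 (fun y => (y : ℂ) ^ l * ψ y) (δ * η)‖ ^ 2 * (1 + |η|) ^ (2 * b)))
        ≤ ENNReal.ofReal (C₁ * C₂ ^ l * δ ^ (1 - 2 * b)) := by
  obtain ⟨K, R, hK, hR, hdecay⟩ := ft_bound ψ (hψ.of_le (by simp)) hψc
  refine ⟨K ^ 2 + 1, 16 * R ^ 2, by positivity, by positivity, fun l δ hδ => ?_⟩
  obtain ⟨hδ0, hδ1⟩ := hδ
  set g : ℝ → ℂ := fun y => (y:ℂ) ^ l * ψ y with hgdef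
  have hπ : (1:ℝ) ≤ 2 * π := by nlinarith [pi_gt_three]
  set E : ℝ := K * (4 * R) ^ l with hE
  have hE0 : 0 < E := mul_pos hK (by positivity)
  set c : ℝ := 2 * E ^ 2 * δ ^ (1 - 2 * b) with hc
  have h2πδ : (0:ℝ) < 2 * π * δ := by positivity
  -- pointwise bound
  have hpt : ∀ η : ℝ, δ ^ 2 * ‖FT1 g (δ * η)‖ ^ 2 * (1 + |η|) ^ (2 * b)
      ≤ c * (δ * (1 + ((2 * π * δ) * η) ^ 2)⁻¹) := by
    intro η
    set u : ℝ := 1 + ((2 * π * δ) * η) ^ 2 with hu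
    have hu1 : (1:ℝ) ≤ u := by nlinarith [sq_nonneg ((2*π*δ)*η)]
    have hu0 : (0:ℝ) < u := by linarith
    have hFT : ‖FT1 g (δ * η)‖ ≤ E / u := by
      rw [FT1_eq]
      rw [le_div_iff₀ hu0, mul_comm]
      have := hdecay l (δ * η)
      calc u * ‖𝓕 g (δ * η)‖
          = (1 + (2 * π * (δ * η)) ^ 2) * ‖𝓕 g (δ * η)‖ := by
            rw [hu]; ring_nf
        _ ≤ K * (4 * R) ^ l := this
    have hFT2 : ‖FT1 g (δ * η)‖ ^ 2 ≤ (E / u) ^ 2 :=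
      pow_le_pow_left₀ (norm_nonneg _) hFT 2
    have key : δ ^ (2 * b) * (1 + |η|) ^ (2 * b) ≤ 2 * u := by
      have h1 : δ ^ (2*b) * (1 + |η|) ^ (2*b) = (δ * (1 + |η|)) ^ (2*b) :=
        (Real.mul_rpow hδ0.le (by positivity)).symm
      have h2 : δ * (1 + |η|) ≤ 1 + δ * |η| := by nlinarith [abs_nonneg η]
      have h3 : (δ * (1 + |η|)) ^ (2*b) ≤ (1 + δ * |η|) ^ (2*b) :=
        Real.rpow_le_rpow (by positivity) h2 (by linarith [hb.1])
      have h4 : (1 + δ * |η|) ^ (2*b) ≤ (1 + δ * |η|) ^ (2:ℝ) :=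
        Real.rpow_le_rpow_of_exponent_le (by nlinarith [abs_nonneg η]) (by linarith [hb.2])
      have h5 : (1 + δ * |η|) ^ (2:ℝ) = (1 + δ * |η|) ^ (2:ℕ) := by
        rw [show ((2:ℝ)) = ((2:ℕ):ℝ) by norm_num, Real.rpow_natCast]
      have h2π2 : (1:ℝ) ≤ (2*π) ^ 2 := by nlinarith
      have h6 : (1 + δ * |η|) ^ (2:ℕ) ≤ 2 * u := by
        rw [hu]
        have habs : |η| ^ 2 = η ^ 2 := sq_abs η
        have hexp : ((2*π*δ)*η) ^ 2 = (2*π) ^ 2 * (δ*η) ^ 2 := by ring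
        have habs2 : (δ * |η|) ^ 2 = (δ * η) ^ 2 := by rw [mul_pow, mul_pow, habs]
        nlinarith [sq_nonneg (1 - δ * |η|), habs2, hexp,
          mul_le_mul_of_nonneg_right h2π2 (sq_nonneg (δ*η))]
      rw [h1]
      calc (δ * (1 + |η|)) ^ (2*b) ≤ (1 + δ * |η|) ^ (2*b) := h3
        _ ≤ (1 + δ * |η|) ^ (2:ℝ) := h4
        _ = (1 + δ * |η|) ^ (2:ℕ) := h5
        _ ≤ 2 * u := h6
    have hδr : δ ^ (1 - 2*b) * δ ^ (2*b) = δ := by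
      rw [← Real.rpow_add hδ0]; norm_num
    have hXY : δ ^ 2 * (1 + |η|) ^ (2*b) ≤ (2 * δ ^ (1 - 2*b) * δ) * u := by
      have e : δ ^ 2 * (1 + |η|) ^ (2*b)
          = (δ ^ (1 - 2*b) * δ) * (δ ^ (2*b) * (1 + |η|) ^ (2*b)) := by
        rw [show (δ ^ (1-2*b) * δ) * (δ ^ (2*b) * (1+|η|) ^ (2*b))
            = (δ ^ (1-2*b) * δ ^ (2*b)) * (δ * (1+|η|) ^ (2*b)) by ring, hδr]
        ring
      rw [e]
      calc (δ ^ (1 - 2*b) * δ) * (δ ^ (2*b) * (1 + |η|) ^ (2*b))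
          ≤ (δ ^ (1 - 2*b) * δ) * (2 * u) :=
            mul_le_mul_of_nonneg_left key (by positivity)
        _ = (2 * δ ^ (1 - 2*b) * δ) * u := by ring
    calc δ ^ 2 * ‖FT1 g (δ * η)‖ ^ 2 * (1 + |η|) ^ (2 * b)
        = (δ ^ 2 * (1 + |η|) ^ (2*b)) * ‖FT1 g (δ * η)‖ ^ 2 := by ring
      _ ≤ ((2 * δ ^ (1 - 2*b) * δ) * u) * ((E / u) ^ 2) := by
          exact mul_le_mul hXY hFT2 (by positivity) (mul_nonneg (by positivity) hu0.le)
      _ = c * (δ * u⁻¹) := by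
          rw [div_pow]
          field_simp
          ring
  -- integrate
  have hGi : Integrable (fun η : ℝ => c * (δ * (1 + ((2*π*δ) * η) ^ 2)⁻¹)) := by
    have h0 : Integrable (fun x : ℝ => (1 + ((2*π*δ) * x) ^ 2)⁻¹) :=
      integrable_inv_one_add_sq.comp_mul_left' (ne_of_gt h2πδ)
    exact (h0.const_mul δ).const_mul c
  have hGnn : 0 ≤ᵐ[volume] (fun η : ℝ => c * (δ * (1 + ((2*π*δ) * η) ^ 2)⁻¹)) :=
    Filter.Eventually.of_forall fun η => by positivity
  calc ∫⁻ η : ℝ, ENNReal.ofReal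
          (δ ^ 2 * ‖FT1 g (δ * η)‖ ^ 2 * (1 + |η|) ^ (2 * b))
      ≤ ∫⁻ η : ℝ, ENNReal.ofReal (c * (δ * (1 + ((2*π*δ) * η) ^ 2)⁻¹)) :=
        lintegral_mono fun η => ENNReal.ofReal_le_ofReal (hpt η)
    _ = ENNReal.ofReal (∫ η : ℝ, c * (δ * (1 + ((2*π*δ) * η) ^ 2)⁻¹)) :=
        (ofReal_integral_eq_lintegral_ofReal hGi hGnn).symm
    _ ≤ ENNReal.ofReal ((K ^ 2 + 1) * (16 * R ^ 2) ^ l * δ ^ (1 - 2 * b)) := by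
        apply ENNReal.ofReal_le_ofReal
        have hint : (∫ η : ℝ, c * (δ * (1 + ((2*π*δ) * η) ^ 2)⁻¹))
            = c * (δ * ((2*π*δ)⁻¹ * π)) := by
          rw [MeasureTheory.integral_const_mul, MeasureTheory.integral_const_mul]
          congr 2
          rw [MeasureTheory.Measure.integral_comp_mul_left (fun x : ℝ => (1 + x ^ 2)⁻¹) (2*π*δ),
            integral_univ_inv_one_add_sq, smul_eq_mul, abs_of_pos (by positivity)]
        rw [hint]
        have hcc : c * (δ * ((2*π*δ)⁻¹ * π)) = E ^ 2 * δ ^ (1 - 2*b) := by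
          rw [hc]
          field_simp
        rw [hcc, hE]
        have h16 : (K * (4*R) ^ l) ^ 2 = K ^ 2 * (16 * R ^ 2) ^ l := by
          rw [mul_pow, ← pow_mul, show (16 * R ^ 2) = (4*R) ^ 2 by ring, ← pow_mul,
            Nat.mul_comm]
        rw [h16]
        have hδp : (0:ℝ) < δ ^ (1 - 2*b) := Real.rpow_pos_of_pos hδ0 _
        have h16p : (0:ℝ) < (16 * R ^ 2) ^ l := by positivity
        nlinarith
end
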